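/- arXiv:1004.5551 — 4 statements merged into one kernel-verified Lean document; each statement's English description precedes it below -/
import Mathlib

section
/- Type class probability bound: Let S be a nonempty finite set, l a positive integer, s^l ∈ S^l, and let q be the type of s^l. Then the product probability assigned by q to the type class of q satisfies ∑_{t^l ∈ S^l, type(t^l) = q} q(t_1)·…·q(t_l) ≥ (l+1)^{−|S|}. -/
/-!
Under the product measure `qˡ`, the type class of counts `c` has probability
`|T_c| ∏ₓ q(x)^{c(x)}`, and `|T_c| = l! / ∏ₓ c(x)!` by orbit–stabilizer for the action of
`Perm (Fin l)` on positions. Writing `a = l q` for the counts of `s`, the letterwise inequality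
`a! aᶜ ≤ c! aᵃ` (the map `c ↦ aᶜ / c!` peaks at `c = a`) shows that the type class of `q` itself
is the most likely one. There are at most `(l+1)^|S|` types and their classes partition
`S^l`, which has probability `1`.
-/

open Finset Equiv MulAction
open scoped Nat

section

variable {ι S : Type*}

theorem Nat.factorial_mul_pow_le_factorial_mul_pow (a c : ℕ) : a ! * a ^ c ≤ c ! * a ^ a := by
  rcases le_total c a with h | h
  · calc a ! * a ^ c = c ! * a.descFactorial (a - c) * a ^ c := by
          rw [← Nat.factorial_mul_descFactorial (Nat.sub_le a c), Nat.sub_sub_self h]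
      _ ≤ c ! * a ^ (a - c) * a ^ c := by gcongr; exact Nat.descFactorial_le_pow _ _
      _ = c ! * a ^ a := by rw [mul_assoc, ← pow_add, Nat.sub_add_cancel h]
  · calc a ! * a ^ c = a ! * a ^ (c - a) * a ^ a := by
          rw [mul_assoc, ← pow_add, Nat.sub_add_cancel h]
      _ ≤ c ! * a ^ a := by gcongr; exact Nat.factorial_mul_pow_sub_le_factorial h

section EmpiricalCount

variable [Fintype ι] [DecidableEq S]

def empiricalCount (t : ι → S) (x : S) : ℕ := #{i | t i = x}

lemma sum_empiricalCount [Fintype S] (t : ι → S) :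
    ∑ x, empiricalCount t x = Fintype.card ι := by
  simp [empiricalCount, sum_card_fiberwise_eq_card_filter]

lemma empiricalCount_le_card (t : ι → S) (x : S) : empiricalCount t x ≤ Fintype.card ι :=
  card_filter_le _ _

lemma empiricalCount_comp_perm (t : ι → S) (σ : Perm ι) :
    empiricalCount (t ∘ σ) = empiricalCount t :=
  funext fun x => card_equiv σ (by simp)

lemma exists_perm_comp_eq_of_empiricalCount_eq {t t' : ι → S}
    (h : empiricalCount t' = empiricalCount t) : ∃ σ : Perm ι, t ∘ σ = t' := by
  have hfiber (x : S) : Fintype.card {i // t' i = x} = Fintype.card {i // t i = x} := by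
    simpa only [empiricalCount, Fintype.card_subtype] using congrFun h x
  let σ : Perm ι := ofFiberEquiv fun x => Fintype.equivOfCardEq (hfiber x)
  exact ⟨σ, funext (ofFiberEquiv_map _)⟩

lemma prod_comp_eq_prod_pow_empiricalCount {M : Type*} [CommMonoid M] [Fintype S]
    (f : S → M) (t : ι → S) : ∏ i, f (t i) = ∏ x, f x ^ empiricalCount t x := by
  rw [← prod_fiberwise univ t]
  refine prod_congr rfl fun x _ => ?_
  rw [prod_congr rfl fun i hi => by rw [(mem_filter.1 hi).2], prod_const]
  rfl

noncomputable def empiricalDist (s : ι → S) (x : S) : ℝ :=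
  empiricalCount s x / Fintype.card ι

lemma sum_prod_empiricalDist [DecidableEq ι] [Fintype S] (s : ι → S) :
    ∑ t : ι → S, ∏ i, empiricalDist s (t i) = 1 := by
  rw [← Fintype.prod_sum fun _ x => empiricalDist s x, prod_const, card_univ]
  rcases eq_or_ne (Fintype.card ι) 0 with h | h
  · rw [h, pow_zero]
  · have hsum : ∑ x, empiricalDist s x = 1 := by
      simp only [empiricalDist, ← sum_div, ← Nat.cast_sum, sum_empiricalCount]
      exact div_self (by exact_mod_cast h)
    rw [hsum, one_pow]

end EmpiricalCount

section TypeClass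

variable [Fintype ι] [DecidableEq ι] [Fintype S] [DecidableEq S]

def typeClass (t : ι → S) : Finset (ι → S) := {t' | empiricalCount t' = empiricalCount t}

@[simp]
lemma mem_typeClass {t t' : ι → S} :
    t' ∈ typeClass t ↔ empiricalCount t' = empiricalCount t := by
  simp [typeClass]

lemma coe_typeClass_eq_orbit (t : ι → S) :
    (typeClass t : Set (ι → S)) = orbit (Perm ι)ᵈᵐᵃ t := by
  ext t'
  simp only [mem_coe, mem_typeClass, mem_orbit_iff]
  constructor
  · intro h
    obtain ⟨σ, hσ⟩ := exists_perm_comp_eq_of_empiricalCount_eq h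
    exact ⟨DomMulAct.mk σ, hσ⟩
  · rintro ⟨g, rfl⟩
    exact empiricalCount_comp_perm t (DomMulAct.mk.symm g)

lemma card_typeClass_mul_prod_factorial (t : ι → S) :
    #(typeClass t) * ∏ x, (empiricalCount t x)! = (Fintype.card ι)! := by
  have hstab : Nat.card (stabilizer (Perm ι)ᵈᵐᵃ t) = ∏ x, (empiricalCount t x)! := by
    rw [Nat.card_congr (subtypeEquiv (q := fun g : Perm ι => t ∘ g = t) DomMulAct.mk.symm
        fun _ => DomMulAct.mem_stabilizer_iff), Nat.card_eq_fintype_card, DomMulAct.stabilizer_card]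
    simp [empiricalCount, Fintype.card_subtype]
  rw [← hstab, mul_comm, ← Set.ncard_coe_finset, coe_typeClass_eq_orbit, ← index_stabilizer,
    Subgroup.card_mul_index, Nat.card_congr DomMulAct.mk.symm, Nat.card_perm,
    Nat.card_eq_fintype_card]

lemma card_typeClass_mul_prod_pow_le (s t : ι → S) :
    #(typeClass t) * ∏ x, empiricalCount s x ^ empiricalCount t x ≤
      #(typeClass s) * ∏ x, empiricalCount s x ^ empiricalCount s x := by
  set a := empiricalCount s
  set c := empiricalCount t
  have hpos : 0 < (∏ x, (a x)!) * ∏ x, (c x)! :=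
    Nat.mul_pos (prod_pos fun x _ => (a x).factorial_pos) (prod_pos fun x _ => (c x).factorial_pos)
  refine le_of_mul_le_mul_right ?_ hpos
  calc (#(typeClass t) * ∏ x, a x ^ c x) * ((∏ x, (a x)!) * ∏ x, (c x)!)
      = (Fintype.card ι)! * ∏ x, ((a x)! * a x ^ c x) := by
        rw [← card_typeClass_mul_prod_factorial t, prod_mul_distrib]; ring
    _ ≤ (Fintype.card ι)! * ∏ x, ((c x)! * a x ^ a x) := by
        gcongr _ * ∏ x, ?_ with x
        exact Nat.factorial_mul_pow_le_factorial_mul_pow _ _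
    _ = (#(typeClass s) * ∏ x, a x ^ a x) * ((∏ x, (a x)!) * ∏ x, (c x)!) := by
        rw [← card_typeClass_mul_prod_factorial s, prod_mul_distrib]; ring

lemma sum_typeClass_prod_empiricalDist_eq (s t : ι → S) :
    ∑ t' ∈ typeClass t, ∏ i, empiricalDist s (t' i) =
      (#(typeClass t) * ∏ x, empiricalCount s x ^ empiricalCount t x : ℕ) /
        (Fintype.card ι : ℝ) ^ Fintype.card ι := by
  rw [sum_congr rfl fun t' ht' => by
    rw [prod_comp_eq_prod_pow_empiricalCount, mem_typeClass.1 ht'], sum_const, nsmul_eq_mul]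
  simp only [empiricalDist, div_pow, prod_div_distrib, prod_pow_eq_pow_sum, sum_empiricalCount]
  push_cast
  ring

lemma sum_typeClass_prod_empiricalDist_le (s t : ι → S) :
    ∑ t' ∈ typeClass t, ∏ i, empiricalDist s (t' i) ≤
      ∑ t' ∈ typeClass s, ∏ i, empiricalDist s (t' i) := by
  rw [sum_typeClass_prod_empiricalDist_eq, sum_typeClass_prod_empiricalDist_eq]
  exact div_le_div_of_nonneg_right (by exact_mod_cast card_typeClass_mul_prod_pow_le s t)
    (by positivity)

lemma card_image_empiricalCount_le :
    #(univ.image (empiricalCount : (ι → S) → S → ℕ)) ≤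
      (Fintype.card ι + 1) ^ Fintype.card S := by
  calc #(univ.image (empiricalCount : (ι → S) → S → ℕ))
      ≤ #(Fintype.piFinset fun _ : S => range (Fintype.card ι + 1)) := by
        refine card_le_card fun c hc => ?_
        obtain ⟨t, -, rfl⟩ := mem_image.1 hc
        simpa [Nat.lt_succ_iff] using empiricalCount_le_card t
    _ = (Fintype.card ι + 1) ^ Fintype.card S := by simp

theorem inv_card_add_one_pow_le_sum_typeClass_prod_empiricalDist (s : ι → S) :
    (((Fintype.card ι : ℝ) + 1) ^ Fintype.card S)⁻¹ ≤
      ∑ t ∈ typeClass s, ∏ i, empiricalDist s (t i) := by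
  set w : (ι → S) → ℝ := fun t => ∏ i, empiricalDist s (t i)
  set types := univ.image (empiricalCount : (ι → S) → S → ℕ)
  rw [inv_le_iff_one_le_mul₀' (by positivity)]
  calc (1 : ℝ) = ∑ c ∈ types, ∑ t with empiricalCount t = c, w t := by
        rw [sum_fiberwise_of_maps_to fun t _ => mem_image_of_mem _ (mem_univ t),
          sum_prod_empiricalDist]
    _ ≤ ∑ _c ∈ types, ∑ t ∈ typeClass s, w t := by
        refine sum_le_sum fun c hc => ?_
        obtain ⟨u, -, rfl⟩ := mem_image.1 hc
        exact sum_typeClass_prod_empiricalDist_le s u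
    _ ≤ _ := by
        rw [sum_const, nsmul_eq_mul]
        gcongr
        · exact sum_nonneg fun t _ => prod_nonneg fun i _ => by unfold empiricalDist; positivity
        · exact_mod_cast card_image_empiricalCount_le

end TypeClass

end

theorem type_class_probability_bound_general
    {S : Type*} [Fintype S] [DecidableEq S]
    (l : ℕ) (s : Fin l → S) :
    (((l : ℝ) + 1) ^ (Fintype.card S))⁻¹ ≤
      ∑ t ∈ univ.filter (fun t : Fin l → S =>
          ∀ x : S, (univ.filter (fun j : Fin l => t j = x)).card
            = (univ.filter (fun j : Fin l => s j = x)).card),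
        ∏ i : Fin l, (((univ.filter (fun j : Fin l => s j = t i)).card : ℝ) / l) := by
  simpa [typeClass, empiricalDist, empiricalCount, funext_iff] using
    inv_card_add_one_pow_le_sum_typeClass_prod_empiricalDist s

/-- Type class probability bound: the i.i.d. product distribution induced by the type `q` of
a sequence `s : Fin l → S` assigns probability at least `(l+1)^{-|S|}` to the type class of
`q`, i.e. to the set of all sequences having the same type as `s`. Here the type of `t`
evaluated at `x` is `|{j : t j = x}| / l`. -/
theorem type_class_probability_bound
    {S : Type*} [Fintype S] [DecidableEq S] [Nonempty S]
    (l : ℕ) (hl : 0 < l) (s : Fin l → S) :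
    (((l : ℝ) + 1) ^ (Fintype.card S))⁻¹ ≤
      ∑ t ∈ univ.filter (fun t : Fin l → S =>
          ∀ x : S, (univ.filter (fun j : Fin l => t j = x)).card
            = (univ.filter (fun j : Fin l => s j = x)).card),
        ∏ i : Fin l, (((univ.filter (fun j : Fin l => s j = t i)).card : ℝ) / l) :=
  type_class_probability_bound_general l s
end

section
/- Finite-family selection lemma (core of random code reduction): Let (Ω, μ) be a probability space, T a nonempty finite index set, δ ∈ [0,1], and for each t ∈ T let f_t : Ω → [0,1] be measurable with ∫ f_t dμ ≥ 1 − δ. Let m ∈ ℕ and ε ∈ (0,1). If |T|·(1+δ)^m·2^{−mε} < 1, then there exist points ω_1, …, ω_m ∈ Ω such that (1/m)·∑_{i=1}^m f_t(ω_i) > 1 − ε for every t ∈ T. -/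
/-!
Put `g_t = 2^(1 - f_t)`. Convexity gives `2^x ≤ 1 + x` on `[0,1]`, so `∫ g_t ≤ 2 - ∫ f_t ≤ 1 + δ`,
and under the product measure the function `∑_t ∏_i g_t(ω_i)` has integral at most
`|T| (1+δ)^m < 2^(mε)`. Some point `ω` lies below that mean; there every summand
`2^(∑_i (1 - f_t(ω_i)))` is below `2^(mε)`, which is the claim after taking logarithms.
-/

open MeasureTheory

lemma Real.two_rpow_le_one_add {x : ℝ} (h0 : 0 ≤ x) (h1 : x ≤ 1) : (2 : ℝ) ^ x ≤ 1 + x := by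
  have := Real.geom_mean_le_arith_mean2_weighted (sub_nonneg.2 h1) h0 zero_le_one zero_le_two
    (sub_add_cancel 1 x)
  rw [Real.one_rpow, one_mul] at this
  linarith

section TwoRpow

variable {Ω : Type*} [MeasurableSpace Ω] {μ : Measure Ω} {g : Ω → ℝ}

lemma integrable_two_rpow_one_sub [IsFiniteMeasure μ] (hg : Measurable g) (hg0 : ∀ ω, 0 ≤ g ω) :
    Integrable (fun ω => (2 : ℝ) ^ (1 - g ω)) μ :=
  .of_mem_Icc 0 2 (measurable_const.pow (measurable_const.sub hg)).aemeasurable <|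
    ae_of_all _ fun ω => ⟨by positivity, by
      simpa using Real.rpow_le_rpow_of_exponent_le one_le_two (by linarith [hg0 ω] : 1 - g ω ≤ 1)⟩

lemma integral_two_rpow_one_sub_le [IsProbabilityMeasure μ] (hg : Measurable g) (hg0 : ∀ ω, 0 ≤ g ω)
    (hg1 : ∀ ω, g ω ≤ 1) : ∫ ω, (2 : ℝ) ^ (1 - g ω) ∂μ ≤ 2 - ∫ ω, g ω ∂μ := by
  have hgi : Integrable g μ :=
    .of_mem_Icc 0 1 hg.aemeasurable (ae_of_all _ fun ω => ⟨hg0 ω, hg1 ω⟩)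
  calc ∫ ω, (2 : ℝ) ^ (1 - g ω) ∂μ ≤ ∫ ω, (2 - g ω) ∂μ :=
        integral_mono_of_nonneg (ae_of_all _ fun ω => by positivity)
          ((integrable_const 2).sub hgi) <| ae_of_all _ fun ω => by
            linarith [Real.two_rpow_le_one_add (sub_nonneg.2 (hg1 ω)) (by linarith [hg0 ω])]
    _ = 2 - ∫ ω, g ω ∂μ := by
        rw [integral_sub (integrable_const 2) hgi, integral_const, probReal_univ, one_smul]

end TwoRpow

lemma exists_forall_lt_of_sum_integral_lt {X T : Type*} [MeasurableSpace X] {ν : Measure X}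
    [IsProbabilityMeasure ν] [Fintype T] {G : T → X → ℝ} {c : ℝ} (hG0 : ∀ t x, 0 ≤ G t x)
    (hGi : ∀ t, Integrable (G t) ν) (hc : ∑ t, ∫ x, G t x ∂ν < c) : ∃ x, ∀ t, G t x < c := by
  obtain ⟨x, hx⟩ := exists_le_integral (integrable_finsetSum Finset.univ fun t _ => hGi t)
  rw [integral_finsetSum Finset.univ fun t _ => hGi t] at hx
  exact ⟨x, fun t => (Finset.single_le_sum (fun t _ => hG0 t x) (Finset.mem_univ t)).trans_lt
    (hx.trans_lt hc)⟩

lemma one_sub_lt_mean_of_prod_two_rpow_lt {ι : Type*} [Fintype ι] {a : ι → ℝ} {ε : ℝ}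
    (h : ∏ i, (2 : ℝ) ^ (1 - a i) < 2 ^ (Fintype.card ι * ε)) :
    1 - ε < (1 / Fintype.card ι) * ∑ i, a i := by
  rw [← Real.rpow_sum_of_pos two_pos, Real.rpow_lt_rpow_left_iff one_lt_two,
    Finset.sum_sub_distrib, Finset.sum_const, Finset.card_univ, nsmul_one] at h
  rcases (Fintype.card ι).eq_zero_or_pos with h0 | hpos
  · have := Fintype.card_eq_zero_iff.1 h0
    simp at h
  · rw [one_div, inv_mul_eq_div, lt_div_iff₀ (by exact_mod_cast hpos)]
    linarith

theorem finite_family_selection_general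
    {Ω : Type*} [MeasurableSpace Ω] (μ : Measure Ω) [IsProbabilityMeasure μ]
    {T : Type*} [Fintype T]
    (δ : ℝ)
    (f : T → Ω → ℝ) (hfm : ∀ t, Measurable (f t))
    (hf0 : ∀ t ω, 0 ≤ f t ω) (hf1 : ∀ t ω, f t ω ≤ 1)
    (hint : ∀ t, 1 - δ ≤ ∫ ω, f t ω ∂μ)
    (m : ℕ) (ε : ℝ)
    (hsmall : (Fintype.card T : ℝ) * (1 + δ) ^ m * (2 : ℝ) ^ (-(m : ℝ) * ε) < 1) :
    ∃ ω : Fin m → Ω, ∀ t : T, 1 - ε < (1 / (m : ℝ)) * ∑ i, f t (ω i) := by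
  have hmean : ∀ t, ∫ ω, (2 : ℝ) ^ (1 - f t ω) ∂μ ≤ 1 + δ := fun t =>
    (integral_two_rpow_one_sub_le (hfm t) (hf0 t) (hf1 t)).trans (by linarith [hint t])
  have hsmall' : (Fintype.card T : ℝ) * (1 + δ) ^ m < 2 ^ ((m : ℝ) * ε) := by
    rwa [neg_mul, Real.rpow_neg zero_le_two, ← div_eq_mul_inv,
      div_lt_one (by positivity)] at hsmall
  have hsum : ∑ t, ∫ ω, ∏ i, (2 : ℝ) ^ (1 - f t (ω i)) ∂Measure.pi (fun _ : Fin m => μ)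
      < 2 ^ ((m : ℝ) * ε) :=
    calc _ = ∑ t, (∫ ω, (2 : ℝ) ^ (1 - f t ω) ∂μ) ^ m := by
          refine Finset.sum_congr rfl fun t _ => ?_
          simpa using integral_fintype_prod_eq_pow (ι := Fin m) (μ := μ)
            fun ω => (2 : ℝ) ^ (1 - f t ω)
      _ ≤ ∑ _t : T, (1 + δ) ^ m := by
          gcongr with t
          exact hmean t
      _ < 2 ^ ((m : ℝ) * ε) := by simpa using hsmall'
  obtain ⟨ω, hω⟩ := exists_forall_lt_of_sum_integral_lt (fun t ω => by positivity)
    (fun t => Integrable.fintype_prod fun _ => integrable_two_rpow_one_sub (hfm t) (hf0 t)) hsum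
  refine ⟨ω, fun t => ?_⟩
  have := one_sub_lt_mean_of_prod_two_rpow_lt (a := fun i => f t (ω i)) (ε := ε)
  rw [Fintype.card_fin] at this
  exact this (hω t)

/-- Finite-family selection lemma (core of the random code reduction): if each of the
finitely many `[0,1]`-valued functions `f t` has mean at least `1 - δ` under the probability
measure `μ`, and `|T| (1+δ)^m 2^{-mε} < 1`, then there are `m` points of `Ω` at which all
empirical averages exceed `1 - ε` simultaneously. -/
theorem finite_family_selection
    {Ω : Type*} [MeasurableSpace Ω] (μ : Measure Ω) [IsProbabilityMeasure μ]
    {T : Type*} [Fintype T] [Nonempty T]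
    (δ : ℝ) (hδ0 : 0 ≤ δ) (hδ1 : δ ≤ 1)
    (f : T → Ω → ℝ) (hfm : ∀ t, Measurable (f t))
    (hf0 : ∀ t ω, 0 ≤ f t ω) (hf1 : ∀ t ω, f t ω ≤ 1)
    (hint : ∀ t, 1 - δ ≤ ∫ ω, f t ω ∂μ)
    (m : ℕ) (ε : ℝ) (hε0 : 0 < ε) (hε1 : ε < 1)
    (hsmall : (Fintype.card T : ℝ) * (1 + δ) ^ m * (2 : ℝ) ^ (-(m : ℝ) * ε) < 1) :
    ∃ ω : Fin m → Ω, ∀ t : T, 1 - ε < (1 / (m : ℝ)) * ∑ i, f t (ω i) :=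
  finite_family_selection_general μ δ f hfm hf0 hf1 hint m ε hsmall
end

section
/- Abstract random code reduction (Lemma: Random Code Reduction, measure-theoretic form): Let S be a nonempty finite set, a > 0, and ε ∈ (0,1). For each l ∈ ℕ let (Ω_l, μ_l) be a probability space and for each s^l ∈ S^l let f_{l,s^l} : Ω_l → [0,1] be measurable, and assume min_{s^l ∈ S^l} ∫ f_{l,s^l} dμ_l ≥ 1 − 2^{−l·a}. Then for all sufficiently large l there exist l² points ω_1, …, ω_{l²} ∈ Ω_l such that (1/l²)·∑_{i=1}^{l²} f_{l,s^l}(ω_i) > 1 − ε for every s^l ∈ S^l. -/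
/-!
Draw `l²` codes independently from `μ l`. For a fixed channel sequence `s`, the losses
`1 - f l s` lie in `[0, 1]` and have mean at most `δ = 2^{-la}`, so by convexity their exponential
moment is at most `exp ((e - 1) δ)`, and the Chernoff bound makes the probability that the total
loss reaches `ε l²` at most `exp (-l² (ε - (e - 1) δ))`. A union bound over the `|S|^l ≤ e^{|S| l}`
channel sequences leaves a probability `< 1` of failure for large `l`, so some sample is good for
every `s` simultaneously.
-/

open MeasureTheory ProbabilityTheory Filter Topology Real

lemma Real.exp_le_one_add_mul_of_mem_Icc {x : ℝ} (h0 : 0 ≤ x) (h1 : x ≤ 1) :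
    exp x ≤ 1 + (exp 1 - 1) * x := by
  have h := convexOn_exp.2 (Set.mem_univ 0) (Set.mem_univ 1) (sub_nonneg.2 h1) h0 (by ring)
  simp only [smul_eq_mul, mul_zero, mul_one, zero_add, exp_zero] at h
  linarith

lemma MeasureTheory.measureReal_pi_sum_ge_le_exp_mul_pow {ι Ω : Type*} [Fintype ι]
    [MeasurableSpace Ω] {μ : Measure Ω} [IsFiniteMeasure μ] {g : Ω → ℝ}
    (hg : Integrable (fun ω => exp (g ω)) μ) (t : ℝ) :
    (Measure.pi fun _ : ι => μ).real {x | t ≤ ∑ i, g (x i)}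
      ≤ exp (-t) * (∫ ω, exp (g ω) ∂μ) ^ Fintype.card ι := by
  have hprod : (fun x : ι → Ω => exp (1 * ∑ i, g (x i))) = fun x => ∏ i, exp (g (x i)) := by
    simp only [one_mul, exp_sum]
  have h := measure_ge_le_exp_mul_mgf (μ := Measure.pi fun _ : ι => μ) t zero_le_one
    (by rw [hprod]; exact Integrable.fintype_prod fun _ => hg)
  rwa [mgf, hprod, integral_fintype_prod_eq_pow (fun ω => exp (g ω)), neg_one_mul] at h

section UnitInterval

variable {Ω : Type*} [MeasurableSpace Ω] {μ : Measure Ω} {g : Ω → ℝ}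

lemma MeasureTheory.integrable_exp_of_le [IsFiniteMeasure μ] (hg : AEMeasurable g μ) {C : ℝ}
    (hC : ∀ ω, g ω ≤ C) : Integrable (fun ω => exp (g ω)) μ :=
  .of_mem_Icc 0 (exp C) hg.exp <| .of_forall fun ω => ⟨(exp_pos _).le, exp_le_exp.2 (hC ω)⟩

variable [IsProbabilityMeasure μ]

lemma MeasureTheory.integral_exp_le_exp_mul_integral (hg : AEMeasurable g μ)
    (h0 : ∀ ω, 0 ≤ g ω) (h1 : ∀ ω, g ω ≤ 1) :
    ∫ ω, exp (g ω) ∂μ ≤ exp ((exp 1 - 1) * ∫ ω, g ω ∂μ) := by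
  have hgi : Integrable g μ := .of_mem_Icc 0 1 hg <| .of_forall fun ω => ⟨h0 ω, h1 ω⟩
  calc ∫ ω, exp (g ω) ∂μ ≤ ∫ ω, (1 + (exp 1 - 1) * g ω) ∂μ :=
        integral_mono (integrable_exp_of_le hg h1) ((integrable_const 1).add (hgi.const_mul _))
          fun ω => exp_le_one_add_mul_of_mem_Icc (h0 ω) (h1 ω)
    _ = (exp 1 - 1) * ∫ ω, g ω ∂μ + 1 := by
        rw [integral_add (integrable_const 1) (hgi.const_mul _), integral_const_mul]
        simp [add_comm]
    _ ≤ exp ((exp 1 - 1) * ∫ ω, g ω ∂μ) := add_one_le_exp _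

lemma MeasureTheory.measureReal_pi_sum_ge_le_exp_of_integral_le {ι : Type*} [Fintype ι]
    (hg : AEMeasurable g μ) (h0 : ∀ ω, 0 ≤ g ω) (h1 : ∀ ω, g ω ≤ 1) {δ : ℝ}
    (hδ : ∫ ω, g ω ∂μ ≤ δ) (t : ℝ) :
    (Measure.pi fun _ : ι => μ).real {x | t ≤ ∑ i, g (x i)}
      ≤ exp (-t + Fintype.card ι * ((exp 1 - 1) * δ)) := by
  have he : 0 ≤ exp 1 - 1 := by linarith [add_one_le_exp 1]
  calc _ ≤ exp (-t) * (∫ ω, exp (g ω) ∂μ) ^ Fintype.card ι :=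
        measureReal_pi_sum_ge_le_exp_mul_pow (integrable_exp_of_le hg h1) t
    _ ≤ exp (-t) * exp ((exp 1 - 1) * δ) ^ Fintype.card ι := by
        gcongr
        exact (integral_exp_le_exp_mul_integral hg h0 h1).trans (by gcongr)
    _ = exp (-t + Fintype.card ι * ((exp 1 - 1) * δ)) := by rw [← exp_nat_mul, ← exp_add]

end UnitInterval

lemma MeasureTheory.exists_forall_notMem_of_sum_measureReal_lt_one {α ι : Type*}
    [MeasurableSpace α] {μ : Measure α} [IsProbabilityMeasure μ] [Fintype ι] {A : ι → Set α}
    (h : ∑ i, μ.real (A i) < 1) : ∃ x, ∀ i, x ∉ A i := by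
  by_contra! hA
  have hcover : ⋃ i, A i = Set.univ := Set.eq_univ_of_forall fun x => Set.mem_iUnion.2 (hA x)
  have := measureReal_iUnion_fintype_le (μ := μ) A
  rw [hcover, probReal_univ] at this
  linarith

lemma MeasureTheory.exists_sample_forall_sum_lt {T ι Ω : Type*} [Fintype T] [Fintype ι]
    [MeasurableSpace Ω] {μ : Measure Ω} [IsProbabilityMeasure μ] {g : T → Ω → ℝ}
    (hg : ∀ s, AEMeasurable (g s) μ) (h0 : ∀ s ω, 0 ≤ g s ω) (h1 : ∀ s ω, g s ω ≤ 1)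
    {δ t : ℝ} (hδ : ∀ s, ∫ ω, g s ω ∂μ ≤ δ)
    (hsmall : Fintype.card T * exp (-t + Fintype.card ι * ((exp 1 - 1) * δ)) < 1) :
    ∃ x : ι → Ω, ∀ s, ∑ i, g s (x i) < t := by
  refine (exists_forall_notMem_of_sum_measureReal_lt_one
    (μ := Measure.pi fun _ : ι => μ) (A := fun s => {x | t ≤ ∑ i, g s (x i)}) ?_).imp
    fun x hx s => not_le.1 (hx s)
  calc _ ≤ ∑ _s : T, exp (-t + Fintype.card ι * ((exp 1 - 1) * δ)) :=
        Finset.sum_le_sum fun s _ =>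
          measureReal_pi_sum_ge_le_exp_of_integral_le (hg s) (h0 s) (h1 s) (hδ s) t
    _ < 1 := by simpa using hsmall

lemma eventually_pow_mul_exp_lt_one {c ε : ℝ} (hc : 0 ≤ c) (hε : 0 < ε) {δ : ℕ → ℝ}
    (hδ : Tendsto δ atTop (𝓝 0)) :
    ∀ᶠ l : ℕ in atTop, c ^ l * exp (-(ε * l ^ 2) + l ^ 2 * δ l) < 1 := by
  have hgrow : Tendsto (fun l : ℕ => (l : ℝ) * (ε - δ l)) atTop atTop :=
    tendsto_natCast_atTop_atTop.atTop_mul_pos hε (by simpa using tendsto_const_nhds.sub hδ)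
  filter_upwards [hgrow.eventually_gt_atTop c, eventually_gt_atTop 0] with l hl hl0
  calc c ^ l * exp (-(ε * l ^ 2) + l ^ 2 * δ l)
      ≤ exp c ^ l * exp (-(ε * l ^ 2) + l ^ 2 * δ l) := by
        gcongr
        linarith [add_one_le_exp c]
    _ = exp (l * (c - l * (ε - δ l))) := by rw [← exp_nat_mul, ← exp_add]; ring_nf
    _ < 1 := exp_lt_one_iff.2 (mul_neg_of_pos_of_neg (by positivity) (by linarith))

theorem random_code_reduction_general
    {S : Type*} [Fintype S]
    (a : ℝ) (ha : 0 < a) (ε : ℝ) (hε0 : 0 < ε)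
    (Ω : ℕ → Type*) [∀ l, MeasurableSpace (Ω l)]
    (μ : ∀ l, Measure (Ω l)) [∀ l, IsProbabilityMeasure (μ l)]
    (f : ∀ l : ℕ, (Fin l → S) → Ω l → ℝ)
    (hfm : ∀ l (s : Fin l → S), Measurable (f l s))
    (hf0 : ∀ l (s : Fin l → S) (ω : Ω l), 0 ≤ f l s ω)
    (hf1 : ∀ l (s : Fin l → S) (ω : Ω l), f l s ω ≤ 1)
    (hint : ∀ l (s : Fin l → S), 1 - (2 : ℝ) ^ (-(l : ℝ) * a) ≤ ∫ ω, f l s ω ∂(μ l)) :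
    ∃ L : ℕ, ∀ l ≥ L, ∃ ω : Fin (l ^ 2) → Ω l,
      ∀ s : Fin l → S, 1 - ε < (1 / ((l : ℝ) ^ 2)) * ∑ i, f l s (ω i) := by
  have hδ : Tendsto (fun l : ℕ => (exp 1 - 1) * (2 : ℝ) ^ (-(l : ℝ) * a)) atTop (𝓝 0) := by
    have h2 := (tendsto_rpow_atBot_of_base_gt_one 2 one_lt_two).comp
      (tendsto_neg_atTop_atBot.comp (tendsto_natCast_atTop_atTop.atTop_mul_const ha))
    simpa [Function.comp_def, neg_mul] using h2.const_mul (exp 1 - 1)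
  have hloss : ∀ l (s : Fin l → S), ∫ ω, 1 - f l s ω ∂μ l ≤ (2 : ℝ) ^ (-(l : ℝ) * a) :=
    fun l s => by
      have hfi : Integrable (f l s) (μ l) :=
        .of_mem_Icc 0 1 (hfm l s).aemeasurable <| .of_forall fun ω => ⟨hf0 l s ω, hf1 l s ω⟩
      rw [integral_sub (integrable_const 1) hfi, integral_const, probReal_univ, one_smul]
      linarith [hint l s]
  obtain ⟨L, hL⟩ := eventually_atTop.1 <|
    (eventually_pow_mul_exp_lt_one (Nat.cast_nonneg (Fintype.card S)) hε0 hδ).and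
      (eventually_gt_atTop 0)
  refine ⟨L, fun l hl => ?_⟩
  obtain ⟨hsmall, hl0⟩ := hL l hl
  obtain ⟨x, hx⟩ := exists_sample_forall_sum_lt (μ := μ l) (ι := Fin (l ^ 2))
    (g := fun s ω => 1 - f l s ω) (t := ε * l ^ 2)
    (fun s => (measurable_const.sub (hfm l s)).aemeasurable)
    (fun s ω => sub_nonneg.2 (hf1 l s ω)) (fun s ω => sub_le_self _ (hf0 l s ω))
    (hloss l) (by simpa [Fintype.card_fun, mul_left_comm] using hsmall)
  refine ⟨x, fun s => ?_⟩
  have hloss_lt := hx s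
  simp only [Finset.sum_sub_distrib, Finset.sum_const, Finset.card_univ, Fintype.card_fin,
    nsmul_eq_mul, Nat.cast_pow, mul_one] at hloss_lt
  rw [one_div, inv_mul_eq_div, lt_div_iff₀ (by positivity)]
  linarith

/-- Abstract random code reduction: if for each block length `l` a random code `μ l` has
worst-case (over `s : Fin l → S`) expected performance at least `1 - 2^{-l a}`, then for all
sufficiently large `l` there are `l²` deterministic codes whose uniform mixture has
worst-case performance exceeding `1 - ε`. -/
theorem random_code_reduction
    {S : Type*} [Fintype S] [Nonempty S]
    (a : ℝ) (ha : 0 < a) (ε : ℝ) (hε0 : 0 < ε) (hε1 : ε < 1)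
    (Ω : ℕ → Type*) [∀ l, MeasurableSpace (Ω l)]
    (μ : ∀ l, Measure (Ω l)) [∀ l, IsProbabilityMeasure (μ l)]
    (f : ∀ l : ℕ, (Fin l → S) → Ω l → ℝ)
    (hfm : ∀ l (s : Fin l → S), Measurable (f l s))
    (hf0 : ∀ l (s : Fin l → S) (ω : Ω l), 0 ≤ f l s ω)
    (hf1 : ∀ l (s : Fin l → S) (ω : Ω l), f l s ω ≤ 1)
    (hint : ∀ l (s : Fin l → S), 1 - (2 : ℝ) ^ (-(l : ℝ) * a) ≤ ∫ ω, f l s ω ∂(μ l)) :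
    ∃ L : ℕ, ∀ l ≥ L, ∃ ω : Fin (l ^ 2) → Ω l,
      ∀ s : Fin l → S, 1 - ε < (1 / ((l : ℝ) ^ 2)) * ∑ i, f l s (ω i) :=
  random_code_reduction_general a ha ε hε0 Ω μ f hfm hf0 hf1 hint
end

section
/- Outer polytope approximation: Let V be a finite-dimensional real normed vector space, A ⊆ V a nonempty compact convex set, and ε > 0. Then there exists a finite set F ⊆ V such that A ⊆ conv(F) and the Hausdorff distance between A and conv(F) (with respect to the norm of V) is at most ε. -/
/-!
Cover `A` by finitely many translates `x + conv B` (`x ∈ s ⊆ A`) of a polytope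
`conv B ⊆ closedBall 0 ε` that is a neighbourhood of `0`. Then
`conv (s + B) = conv s + conv B` contains `A` and, `A` being convex, lies in
`A + closedBall 0 ε`. For `B` take `t - t` with `t ⊆ ball 0 (ε / 2)` finite and affinely
spanning: if `c` is interior to `conv t`, then `0 = c - c` is interior to
`conv t - conv t = conv (t - t)`.
-/

open Set Metric Pointwise Topology

theorem exists_finset_subset_closedBall_convexHull_mem_nhds_zero
    {V : Type*} [NormedAddCommGroup V] [NormedSpace ℝ V] [FiniteDimensional ℝ V]
    {ε : ℝ} (hε : 0 < ε) :
    ∃ B : Finset V, (B : Set V) ⊆ closedBall 0 ε ∧ convexHull ℝ (B : Set V) ∈ 𝓝 0 := by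
  classical
  obtain ⟨t, htε, htind, htspan⟩ :=
    (isOpen_ball (x := (0 : V))).exists_subset_affineIndependent_span_eq_top
      (nonempty_ball.2 (half_pos hε))
  have htfin : t.Finite := finite_set_of_fin_dim_affineIndependent ℝ htind
  obtain ⟨c, hc⟩ := interior_convexHull_nonempty_iff_affineSpan_eq_top.2 htspan
  refine ⟨htfin.toFinset - htfin.toFinset, ?_, ?_⟩
  · rw [Finset.coe_sub, htfin.coe_toFinset]
    rintro _ ⟨x, hx, y, hy, rfl⟩
    have hx' := mem_ball_zero_iff.1 (htε hx)
    have hy' := mem_ball_zero_iff.1 (htε hy)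
    rw [mem_closedBall_zero_iff]
    linarith [norm_sub_le x y]
  · rw [Finset.coe_sub, htfin.coe_toFinset, convexHull_sub]
    have h0 : (0 : V) ∈ interior (convexHull ℝ t) - {c} := ⟨c, hc, c, rfl, sub_self c⟩
    refine Filter.mem_of_superset (isOpen_interior.sub_right.mem_nhds h0) ?_
    exact sub_subset_sub interior_subset (singleton_subset_iff.2 (interior_subset hc))

theorem IsCompact.exists_finset_subset_add_of_mem_nhds_zero
    {G : Type*} [AddGroup G] [TopologicalSpace G] [IsTopologicalAddGroup G]
    {A K : Set G} (hA : IsCompact A) (hK : K ∈ 𝓝 0) :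
    ∃ s : Finset G, (s : Set G) ⊆ A ∧ A ⊆ s + K := by
  obtain ⟨s, hsA, hAs⟩ := hA.elim_nhds_subcover (· +ᵥ K) fun x _ ↦ vadd_mem_nhds_self.2 hK
  exact ⟨s, hsA, hAs.trans_eq (iUnion_vadd_set _ _)⟩

theorem Metric.hausdorffDist_le_of_subset_of_subset_add_closedBall
    {E : Type*} [SeminormedAddCommGroup E] {A C : Set E} {ε : ℝ} (hε : 0 ≤ ε)
    (hAC : A ⊆ C) (hCA : C ⊆ A + closedBall 0 ε) : hausdorffDist A C ≤ ε := by
  refine hausdorffDist_le_of_mem_dist hε (fun x hx ↦ ⟨x, hAC hx, by simpa using hε⟩) ?_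
  intro y hy
  obtain ⟨x, hx, z, hz, rfl⟩ := hCA hy
  exact ⟨x, hx, by simpa [dist_eq_norm] using hz⟩

theorem outer_polytope_approximation_general
    {V : Type*} [NormedAddCommGroup V] [NormedSpace ℝ V] [FiniteDimensional ℝ V]
    (A : Set V) (hAcomp : IsCompact A) (hAconv : Convex ℝ A)
    (ε : ℝ) (hε : 0 < ε) :
    ∃ F : Finset V, A ⊆ convexHull ℝ (F : Set V) ∧
      Metric.hausdorffDist A (convexHull ℝ (F : Set V)) ≤ ε := by
  classical
  obtain ⟨B, hBε, hB⟩ := exists_finset_subset_closedBall_convexHull_mem_nhds_zero (V := V) hε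
  obtain ⟨s, hsA, hAs⟩ := hAcomp.exists_finset_subset_add_of_mem_nhds_zero hB
  have hconv_add : convexHull ℝ ((s + B : Finset V) : Set V) =
      convexHull ℝ (s : Set V) + convexHull ℝ (B : Set V) := by
    rw [Finset.coe_add, convexHull_add]
  have hAF : A ⊆ convexHull ℝ ((s + B : Finset V) : Set V) :=
    hconv_add ▸ hAs.trans (add_subset_add_right (subset_convexHull ℝ _))
  refine ⟨s + B, hAF, hausdorffDist_le_of_subset_of_subset_add_closedBall hε.le hAF ?_⟩
  rw [hconv_add]
  exact add_subset_add (convexHull_min hsA hAconv) (convexHull_min hBε (convex_closedBall 0 ε))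

/-- Outer polytope approximation: every nonempty compact convex set `A` in a
finite-dimensional real normed space can be enclosed in a convex polytope `conv F`
(`F` finite) whose Hausdorff distance to `A` is at most `ε`. -/
theorem outer_polytope_approximation
    {V : Type*} [NormedAddCommGroup V] [NormedSpace ℝ V] [FiniteDimensional ℝ V]
    (A : Set V) (hA : A.Nonempty) (hAcomp : IsCompact A) (hAconv : Convex ℝ A)
    (ε : ℝ) (hε : 0 < ε) :
    ∃ F : Finset V, A ⊆ convexHull ℝ (F : Set V) ∧
      Metric.hausdorffDist A (convexHull ℝ (F : Set V)) ≤ ε :=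
  outer_polytope_approximation_general A hAcomp hAconv ε hε
end
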